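/- Let m ≥ 1, D ≥ 1, and let D₀ be any set of Dyck words of length 2m each of height at most D. Then the set {1·w : w ∈ D₀} of binary words of length 2m+1 is mutually uncorrelated and every word in it has (D+1)-bounded running digital sum ((D+1)-BRDS). -/

import Mathlib

/-- The four-letter DNA alphabet. -/
inductive DNA | A | T | G | C
deriving DecidableEq

/-- Hamming distance between two words (of equal length) given as lists. -/
def hammingD {α : Type*} [DecidableEq α] (x y : List α) : ℕ :=
  (x.zip y).countP (fun p => decide (p.1 ≠ p.2))

/-- A binary word has `D`-bounded running digital sum if in every prefix the
numbers of ones and zeros differ by at most `D`. -/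
def brds (D : ℕ) (w : List Bool) : Prop :=
  ∀ k ≤ w.length,
    (((w.take k).count true : ℤ) - ((w.take k).count false : ℤ)).natAbs ≤ D

/-- The letters `G`, `C` of the DNA alphabet. -/
def isGC : DNA → Bool
  | DNA.G => true
  | DNA.C => true
  | _ => false

/-- A DNA word is `D`-GC-prefix-balanced if in every prefix the number of
letters from {G,C} and the number of letters from {A,T} differ by at most `D`. -/
def gcpb (D : ℕ) (w : List DNA) : Prop :=
  ∀ k ≤ w.length,
    (((w.take k).countP isGC : ℤ) - ((w.take k).countP (fun c => !(isGC c)) : ℤ)).natAbs ≤ D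

/-- A word is self-uncorrelated if no proper nonempty prefix equals the suffix
of the same length. -/
def selfUncorr {α : Type*} (w : List α) : Prop :=
  ∀ k, 1 ≤ k → k ≤ w.length - 1 → w.take k ≠ w.drop (w.length - k)

/-- A set of words is mutually uncorrelated if every word is self-uncorrelated
and for every ordered pair of distinct words `x`, `y` no nonempty prefix of `y`
equals a suffix of `x` of the same length. -/
def mutUncorr {α : Type*} (S : Set (List α)) : Prop :=
  (∀ w ∈ S, selfUncorr w) ∧
  ∀ x ∈ S, ∀ y ∈ S, x ≠ y →
    ∀ k, 1 ≤ k → k ≤ x.length → y.take k ≠ x.drop (x.length - k)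

/-- A Dyck word: equal numbers of ones and zeros, and every prefix has at least
as many ones as zeros. -/
def isDyck (w : List Bool) : Prop :=
  w.count true = w.count false ∧
  ∀ k ≤ w.length, (w.take k).count false ≤ (w.take k).count true

/-- The height of a (Dyck) word is at most `D`: in every prefix the number of
ones exceeds the number of zeros by at most `D`. -/
def heightLe (D : ℕ) (w : List Bool) : Prop :=
  ∀ k ≤ w.length, ((w.take k).count true : ℤ) - ((w.take k).count false : ℤ) ≤ (D : ℤ)

/-! A Dyck word has at least as many ones as zeros in every prefix, hence at most as many
in every suffix. After prepending a one, every nonempty prefix has strictly more ones than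
zeros, so no nonempty prefix of `1u` can equal a suffix of `1w` of length at most `|w|`.
The only remaining overlap is the whole word, excluded for distinct words of equal length. -/

namespace isDyck

variable {w : List Bool}

lemma count_false_take_le (hw : isDyck w) (k : ℕ) :
    (w.take k).count false ≤ (w.take k).count true := by
  rcases le_or_gt k w.length with hk | hk
  · exact hw.2 k hk
  · simpa [List.take_of_length_le hk.le] using hw.2 w.length le_rfl

lemma count_true_drop_le (hw : isDyck w) (k : ℕ) :
    (w.drop k).count true ≤ (w.drop k).count false := by
  have hsplit (b : Bool) : w.count b = (w.take k).count b + (w.drop k).count b := by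
    rw [← List.count_append, List.take_append_drop]
  have := hw.count_false_take_le k
  have := hw.1
  have := hsplit true
  have := hsplit false
  omega

lemma count_false_take_cons_lt (hw : isDyck w) {k : ℕ} (hk : 1 ≤ k) :
    ((true :: w).take k).count false < ((true :: w).take k).count true := by
  obtain ⟨j, rfl⟩ : ∃ j, k = j + 1 := ⟨k - 1, by omega⟩
  have := hw.count_false_take_le j
  rw [List.take_succ_cons, List.count_cons_self, List.count_cons_of_ne (by decide)]
  omega

lemma take_cons_ne_drop_cons {u : List Bool} (hu : isDyck u) (hw : isDyck w) {k : ℕ}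
    (hk₁ : 1 ≤ k) (hk : k ≤ w.length) :
    (true :: u).take k ≠ (true :: w).drop ((true :: w).length - k) := by
  have hdrop : (true :: w).drop ((true :: w).length - k) = w.drop (w.length - k) := by
    rw [List.length_cons, show w.length + 1 - k = w.length - k + 1 by omega, List.drop_succ_cons]
  intro heq
  have hpos := hu.count_false_take_cons_lt hk₁
  rw [heq, hdrop] at hpos
  have := hw.count_true_drop_le (w.length - k)
  omega

lemma brds_cons (hw : isDyck w) {D : ℕ} (hh : heightLe D w) : brds (D + 1) (true :: w) := by
  intro k hk
  rcases k with _ | j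
  · simp
  · rw [List.length_cons] at hk
    have := hw.count_false_take_le j
    have := hh j (by omega)
    rw [List.take_succ_cons, List.count_cons_self, List.count_cons_of_ne (by decide)]
    omega

end isDyck

theorem stmt7_general (m D : ℕ) (D0 : Set (List Bool))
    (hD0 : ∀ w ∈ D0, w.length = 2 * m ∧ isDyck w ∧ heightLe D w) :
    mutUncorr ((fun w => true :: w) '' D0) ∧
    ∀ v ∈ (fun w => true :: w) '' D0, brds (D + 1) v := by
  refine ⟨⟨?_, ?_⟩, ?_⟩
  · rintro _ ⟨w, hw, rfl⟩ k hk₁ hk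
    have hd := (hD0 w hw).2.1
    exact hd.take_cons_ne_drop_cons hd hk₁ (by simpa using hk)
  · rintro _ ⟨x, hx, rfl⟩ _ ⟨y, hy, rfl⟩ hne k hk₁ hk heq
    obtain ⟨hlx, hdx, -⟩ := hD0 x hx
    obtain ⟨hly, hdy, -⟩ := hD0 y hy
    rw [List.length_cons] at hk
    rcases Nat.lt_or_ge k (x.length + 1) with hlt | hge
    · exact hdy.take_cons_ne_drop_cons hdx hk₁ (by omega) heq
    · obtain rfl : k = x.length + 1 := by omega
      have hxy : x.length = y.length := by omega
      simp only [hxy, List.take_succ_cons, List.take_length, List.length_cons, tsub_self,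
        List.drop_zero, List.cons.injEq, true_and] at heq
      exact hne (by rw [heq])
  · rintro _ ⟨w, hw, rfl⟩
    exact (hD0 w hw).2.1.brds_cons (hD0 w hw).2.2

/-- prepending a one to every Dyck word of length `2m` of height
at most `D` yields a mutually uncorrelated set of binary words each with
`(D+1)`-bounded running digital sum. -/
theorem stmt7 (m D : ℕ) (hm : 1 ≤ m) (hD : 1 ≤ D) (D0 : Set (List Bool))
    (hD0 : ∀ w ∈ D0, w.length = 2 * m ∧ isDyck w ∧ heightLe D w) :
    mutUncorr ((fun w => true :: w) '' D0) ∧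
    ∀ v ∈ (fun w => true :: w) '' D0, brds (D + 1) v :=
  stmt7_general m D D0 hD0
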